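/- arXiv:1108.6145 — 4 statements merged into one kernel-verified Lean document; each statement's English description precedes it below -/
import Mathlib

section
/- Let g : [0,∞) → (0,∞) be non-decreasing and satisfy the doubling condition g(2r) ≤ C₀ g(r) for all r ≥ 0, for some constant C₀ > 0. Then for every z ≥ 0 and every r > 0 one has V(z,r) ≤ 2 C₀ V(z, r/2). -/
/-!
Contracting the ball `B(z, r)` towards its centre by the homothety `s ↦ (s + z) / 2` lands
inside `B(z, r / 2)` and halves lengths. Along it the weight loses at most the doubling
constant: `g s ≤ g (s + z) = g (2 · (s + z) / 2) ≤ C₀ g ((s + z) / 2)`, since `g` is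
non-decreasing and `z ≥ 0`. Integrating gives the factor `2 C₀`.
-/

open MeasureTheory Set

section Doubling

variable {g : ℝ → ℝ} {C : ℝ}

theorem MonotoneOn.intervalIntegrable_of_nonneg (hmono : MonotoneOn g (Ici 0)) {a b : ℝ}
    (ha : 0 ≤ a) (hb : 0 ≤ b) : IntervalIntegrable g volume a b :=
  (hmono.mono fun _ hx => (le_min ha hb).trans hx.1).intervalIntegrable

theorem le_mul_apply_midpoint_of_doubling (hmono : MonotoneOn g (Ici 0))
    (hdbl : ∀ x, 0 ≤ x → g (2 * x) ≤ C * g x) {z s : ℝ} (hz : 0 ≤ z) (hs : 0 ≤ s) :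
    g s ≤ C * g (s / 2 + z / 2) :=
  calc g s ≤ g (2 * (s / 2 + z / 2)) := hmono hs (by simp only [mem_Ici]; linarith) (by linarith)
    _ ≤ C * g (s / 2 + z / 2) := hdbl _ (by positivity)

theorem integral_le_two_mul_integral_midpoints_of_doubling (hmono : MonotoneOn g (Ici 0))
    (hdbl : ∀ x, 0 ≤ x → g (2 * x) ≤ C * g x) {z a b : ℝ} (hz : 0 ≤ z) (ha : 0 ≤ a)
    (hab : a ≤ b) :
    ∫ s in a..b, g s ≤ 2 * C * ∫ x in a / 2 + z / 2..b / 2 + z / 2, g x := by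
  have hmono_mid : MonotoneOn (fun s => g (s / 2 + z / 2)) (Ici 0) :=
    fun x hx y hy hxy => hmono (by simp only [mem_Ici] at hx ⊢; positivity)
      (by simp only [mem_Ici] at hy ⊢; positivity) (by linarith)
  calc ∫ s in a..b, g s ≤ ∫ s in a..b, C * g (s / 2 + z / 2) :=
        intervalIntegral.integral_mono_on hab (hmono.intervalIntegrable_of_nonneg ha (ha.trans hab))
          ((hmono_mid.intervalIntegrable_of_nonneg ha (ha.trans hab)).const_mul C)
          fun s hs => le_mul_apply_midpoint_of_doubling hmono hdbl hz (ha.trans hs.1)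
    _ = 2 * C * ∫ x in a / 2 + z / 2..b / 2 + z / 2, g x := by
      rw [intervalIntegral.integral_const_mul, intervalIntegral.integral_comp_div_add _ two_ne_zero,
        smul_eq_mul]
      ring

end Doubling

/-- Volume doubling for the weighted half-line `([0,∞), g dr)` (Lemma 4.1):
if `g` is non-decreasing, positive, and satisfies `g(2r) ≤ C₀ g(r)`, then
`V(z,r) ≤ 2 C₀ V(z, r/2)`, where `V(z,r) = ∫_{B(z,r)} g(s) ds` and
`B(z,r) = (max{z-r,0}, z+r)`. -/
theorem volume_doubling (g : ℝ → ℝ) (C₀ : ℝ) (hC₀ : 0 < C₀)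
    (hgpos : ∀ r : ℝ, 0 ≤ r → 0 < g r)
    (hgmono : ∀ a b : ℝ, 0 ≤ a → a ≤ b → g a ≤ g b)
    (hdbl : ∀ r : ℝ, 0 ≤ r → g (2 * r) ≤ C₀ * g r)
    (z : ℝ) (hz : 0 ≤ z) (r : ℝ) (hr : 0 < r) :
    (∫ s in Ioo (max (z - r) 0) (z + r), g s) ≤
      2 * C₀ * ∫ s in Ioo (max (z - r / 2) 0) (z + r / 2), g s := by
  set a := max (z - r) 0
  set a' := max (z - r / 2) 0
  have hmono : MonotoneOn g (Ici 0) := fun x hx y _ hxy => hgmono x y hx hxy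
  have ha : 0 ≤ a := le_max_right _ _
  have ha' : 0 ≤ a' := le_max_right _ _
  have hab : a ≤ z + r := max_le (by linarith) (by linarith)
  have ha'_le : a' ≤ a / 2 + z / 2 := max_le (by linarith [le_max_left (z - r) 0]) (by positivity)
  have hend : (z + r) / 2 + z / 2 = z + r / 2 := by ring
  rw [← integral_Ioc_eq_integral_Ioo, ← integral_Ioc_eq_integral_Ioo,
    ← intervalIntegral.integral_of_le hab, ← intervalIntegral.integral_of_le (by linarith)]
  calc ∫ s in a..z + r, g s ≤ 2 * C₀ * ∫ x in a / 2 + z / 2..z + r / 2, g x := by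
        simpa only [hend] using
          integral_le_two_mul_integral_midpoints_of_doubling hmono hdbl hz ha hab
    _ ≤ 2 * C₀ * ∫ x in a'..z + r / 2, g x := by
      gcongr
      refine intervalIntegral.integral_mono_interval ha'_le (by linarith) le_rfl ?_
        (hmono.intervalIntegrable_of_nonneg ha' (by linarith))
      filter_upwards [ae_restrict_mem measurableSet_Ioc] with x hx
      exact (hgpos x (ha'.trans hx.1.le)).le
end

section
/- Let g : [0,∞) → (0,∞) be non-decreasing. Then for every z ≥ 0, every r > 0, and every function f that is locally absolutely continuous on the closure of B(z,r) with derivative f′ satisfying ∫_{B(z,r)} |f′(s)|² g(s) ds < ∞, one has inf_{ξ∈ℝ} ∫_{B(z,r)} |f(s) − ξ|² g(s) ds ≤ 4 r² ∫_{B(z,r)} |f′(s)|² g(s) ds. -/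
/-!
Take `ξ = f b` with `b = z + r` the right end of the ball `(a, b)`. For `s ∈ (a, b)`,
Cauchy–Schwarz and the monotonicity of `g` give
`(f s - f b)² g(s) ≤ (b - s) (∫ₛᵇ f'²) g(s) ≤ (b - s) ∫ₛᵇ f'² g ≤ (b - a) ∫ₐᵇ f'² g`,
and integrating over `(a, b)` yields the bound with constant `(b - a)² ≤ (2r)²`.
-/

open MeasureTheory Set

theorem sq_integral_le_measureReal_univ_mul_integral_sq {α : Type*} [MeasurableSpace α]
    {μ : Measure α} [IsFiniteMeasure μ] {φ : α → ℝ} (hφ : MemLp φ 2 μ) :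
    (∫ x, φ x ∂μ) ^ 2 ≤ μ.real univ * ∫ x, φ x ^ 2 ∂μ := by
  have hφ1 : Integrable φ μ := hφ.integrable one_le_two
  -- `c ↦ ∫ (φ - c)²` is a nonnegative quadratic, so its discriminant is `≤ 0`
  have hquad : ∀ c : ℝ,
      0 ≤ μ.real univ * (c * c) + (-2 * ∫ x, φ x ∂μ) * c + ∫ x, φ x ^ 2 ∂μ := by
    intro c
    have hexp : ∫ x, (φ x - c) ^ 2 ∂μ =
        μ.real univ * (c * c) + (-2 * ∫ x, φ x ∂μ) * c + ∫ x, φ x ^ 2 ∂μ := by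
      have h2 : Integrable (fun x => 2 * φ x * c) μ := (hφ1.const_mul 2).mul_const c
      simp_rw [sub_sq]
      rw [integral_add (f := fun x => φ x ^ 2 - 2 * φ x * c) (hφ.integrable_sq.sub h2)
          (integrable_const _), integral_sub hφ.integrable_sq h2, integral_mul_const,
        integral_const_mul, integral_const, smul_eq_mul]
      ring
    exact hexp ▸ integral_nonneg fun x => sq_nonneg _
  have := discrim_le_zero hquad
  rw [discrim] at this
  linarith

theorem sq_setIntegral_Ioc_mul_le_of_monotoneOn {a b : ℝ} (hab : a ≤ b) {g φ : ℝ → ℝ}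
    (hg0 : 0 ≤ g a) (hg : MonotoneOn g (Icc a b))
    (hφ : AEStronglyMeasurable φ (volume.restrict (Ioc a b)))
    (hφg : IntegrableOn (fun t => φ t ^ 2 * g t) (Ioc a b)) :
    (∫ t in Ioc a b, φ t) ^ 2 * g a ≤ (b - a) * ∫ t in Ioc a b, φ t ^ 2 * g t := by
  have hga_le : ∀ t ∈ Ioc a b, g a ≤ g t := fun t ht =>
    hg (left_mem_Icc.mpr hab) (Ioc_subset_Icc_self ht) ht.1.le
  rcases hg0.eq_or_lt with hga | hga
  · rw [← hga, mul_zero]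
    exact mul_nonneg (sub_nonneg.mpr hab) <| setIntegral_nonneg measurableSet_Ioc fun t ht =>
      mul_nonneg (sq_nonneg _) (hga ▸ hga_le t ht)
  have hφsq : IntegrableOn (fun t => φ t ^ 2) (Ioc a b) := by
    refine (hφg.const_mul (g a)⁻¹).mono' (hφ.pow 2) ?_
    refine (ae_restrict_iff' measurableSet_Ioc).mpr (ae_of_all _ fun t ht => ?_)
    rw [Real.norm_of_nonneg (sq_nonneg _), inv_mul_eq_div, le_div_iff₀ hga]
    exact mul_le_mul_of_nonneg_left (hga_le t ht) (sq_nonneg _)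
  have hCS : (∫ t in Ioc a b, φ t) ^ 2 ≤ (b - a) * ∫ t in Ioc a b, φ t ^ 2 := by
    have := sq_integral_le_measureReal_univ_mul_integral_sq
      ((memLp_two_iff_integrable_sq hφ).mpr hφsq)
    rwa [measureReal_restrict_apply_univ, Real.volume_real_Ioc_of_le hab] at this
  have hweight : g a * ∫ t in Ioc a b, φ t ^ 2 ≤ ∫ t in Ioc a b, φ t ^ 2 * g t := by
    rw [← integral_const_mul]
    refine setIntegral_mono_on (hφsq.const_mul _) hφg measurableSet_Ioc fun t ht => ?_
    rw [mul_comm]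
    exact mul_le_mul_of_nonneg_left (hga_le t ht) (sq_nonneg _)
  calc (∫ t in Ioc a b, φ t) ^ 2 * g a ≤ (b - a) * ((∫ t in Ioc a b, φ t ^ 2) * g a) := by
        rw [← mul_assoc]; exact mul_le_mul_of_nonneg_right hCS hga.le
    _ ≤ (b - a) * ∫ t in Ioc a b, φ t ^ 2 * g t := by
        rw [mul_comm _ (g a)]; exact mul_le_mul_of_nonneg_left hweight (sub_nonneg.mpr hab)

theorem setIntegral_Ioo_sq_sub_right_mul_le {a b : ℝ} (hab : a ≤ b) {g f f' : ℝ → ℝ}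
    (hg0 : 0 ≤ g a) (hg : MonotoneOn g (Icc a b)) (hf' : IntegrableOn f' (Icc a b))
    (hf : ∀ x ∈ Icc a b, f b - f x = ∫ t in x..b, f' t)
    (hf'g : IntegrableOn (fun t => f' t ^ 2 * g t) (Ioo a b)) :
    ∫ s in Ioo a b, (f s - f b) ^ 2 * g s ≤ (b - a) ^ 2 * ∫ s in Ioo a b, f' s ^ 2 * g s := by
  have hg_nonneg : ∀ t ∈ Icc a b, 0 ≤ g t := fun t ht =>
    hg0.trans (hg (left_mem_Icc.mpr hab) ht ht.1)
  have hpoint : ∀ s ∈ Ioo a b,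
      (f s - f b) ^ 2 * g s ≤ (b - a) * ∫ t in Ioo a b, f' t ^ 2 * g t := by
    intro s hs
    have hsub : Icc s b ⊆ Icc a b := Icc_subset_Icc_left hs.1.le
    have hfs : (f s - f b) ^ 2 = (∫ t in Ioc s b, f' t) ^ 2 := by
      rw [← intervalIntegral.integral_of_le hs.2.le, ← hf s (Ioo_subset_Icc_self hs)]
      ring
    have hf'g_s : IntegrableOn (fun t => f' t ^ 2 * g t) (Ioc s b) :=
      (integrableOn_Ioc_iff_integrableOn_Ioo).mpr (hf'g.mono_set (Ioo_subset_Ioo_left hs.1.le))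
    calc (f s - f b) ^ 2 * g s ≤ (b - s) * ∫ t in Ioc s b, f' t ^ 2 * g t := by
          rw [hfs]
          exact sq_setIntegral_Ioc_mul_le_of_monotoneOn hs.2.le
            (hg_nonneg s (Ioo_subset_Icc_self hs)) (hg.mono hsub)
            (hf'.mono_set (Ioc_subset_Icc_self.trans hsub)).aestronglyMeasurable hf'g_s
      _ ≤ (b - a) * ∫ t in Ioo a b, f' t ^ 2 * g t := by
          refine mul_le_mul (by linarith [hs.1]) ?_
            (setIntegral_nonneg measurableSet_Ioc fun t ht =>
              mul_nonneg (sq_nonneg _) (hg_nonneg t (hsub (Ioc_subset_Icc_self ht))))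
            (sub_nonneg.mpr hab)
          rw [integral_Ioc_eq_integral_Ioo]
          refine setIntegral_mono_set hf'g ?_ (Ioo_subset_Ioo_left hs.1.le).eventuallyLE
          filter_upwards [ae_restrict_mem measurableSet_Ioo] with t ht
          exact mul_nonneg (sq_nonneg _) (hg_nonneg t (Ioo_subset_Icc_self ht))
  -- no measurability of `f` or `g` is needed: a set integral is bounded by any pointwise bound
  have hbound := norm_setIntegral_le_of_norm_le_const
    (measure_Ioo_lt_top (μ := volume) (a := a) (b := b)) fun s hs =>
      (Real.norm_of_nonneg (mul_nonneg (sq_nonneg _)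
        (hg_nonneg s (Ioo_subset_Icc_self hs)))).trans_le (hpoint s hs)
  rw [Real.volume_real_Ioo_of_le hab] at hbound
  calc ∫ s in Ioo a b, (f s - f b) ^ 2 * g s
      ≤ ‖∫ s in Ioo a b, (f s - f b) ^ 2 * g s‖ := Real.le_norm_self _
    _ ≤ _ := hbound
    _ = _ := by ring

/-- Poincaré inequality for the weighted half-line `([0,∞), g dr)` (Lemma 4.2):
for non-decreasing positive `g`, every ball `B(z,r) = (max{z-r,0}, z+r)` and every
locally absolutely continuous `f` on its closure with `∫_{B(z,r)} |f'|² g < ∞`, one has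
`inf_ξ ∫_{B(z,r)} |f-ξ|² g ≤ 4 r² ∫_{B(z,r)} |f'|² g`. Local absolute continuity is
expressed through the fundamental theorem of calculus with integrable derivative `f'`. -/
theorem poincare_inequality (g : ℝ → ℝ)
    (hgpos : ∀ r : ℝ, 0 ≤ r → 0 < g r)
    (hgmono : ∀ a b : ℝ, 0 ≤ a → a ≤ b → g a ≤ g b)
    (z : ℝ) (hz : 0 ≤ z) (r : ℝ) (hr : 0 < r)
    (f f' : ℝ → ℝ)
    (hf'int : IntegrableOn f' (Icc (max (z - r) 0) (z + r)))
    (hf : ∀ x ∈ Icc (max (z - r) 0) (z + r), ∀ y ∈ Icc (max (z - r) 0) (z + r),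
      f y - f x = ∫ t in x..y, f' t)
    (hfin : IntegrableOn (fun s => (f' s) ^ 2 * g s) (Ioo (max (z - r) 0) (z + r))) :
    (⨅ ξ : ℝ, ∫ s in Ioo (max (z - r) 0) (z + r), (f s - ξ) ^ 2 * g s) ≤
      4 * r ^ 2 * ∫ s in Ioo (max (z - r) 0) (z + r), (f' s) ^ 2 * g s := by
  set a := max (z - r) 0
  set b := z + r
  have ha : 0 ≤ a := le_max_right _ _
  have hab : a ≤ b := max_le (by linarith) (by linarith)
  have hlen : (b - a) ^ 2 ≤ 4 * r ^ 2 := by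
    nlinarith [le_max_left (z - r) 0]
  have hbdd : BddBelow (range fun ξ : ℝ => ∫ s in Ioo a b, (f s - ξ) ^ 2 * g s) :=
    ⟨0, forall_mem_range.mpr fun ξ => setIntegral_nonneg measurableSet_Ioo fun s hs =>
      mul_nonneg (sq_nonneg _) (hgpos s (ha.trans hs.1.le)).le⟩
  have hI : 0 ≤ ∫ s in Ioo a b, f' s ^ 2 * g s := setIntegral_nonneg measurableSet_Ioo
    fun s hs => mul_nonneg (sq_nonneg _) (hgpos s (ha.trans hs.1.le)).le
  calc (⨅ ξ : ℝ, ∫ s in Ioo a b, (f s - ξ) ^ 2 * g s)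
      ≤ ∫ s in Ioo a b, (f s - f b) ^ 2 * g s := ciInf_le hbdd (f b)
    _ ≤ (b - a) ^ 2 * ∫ s in Ioo a b, f' s ^ 2 * g s :=
        setIntegral_Ioo_sq_sub_right_mul_le hab (hgpos a ha).le
          (fun x hx y _ hxy => hgmono x y (ha.trans hx.1) hxy) hf'int
          (fun x hx => hf x hx b (right_mem_Icc.mpr hab)) hfin
    _ ≤ 4 * r ^ 2 * ∫ s in Ioo a b, f' s ^ 2 * g s := mul_le_mul_of_nonneg_right hlen hI
end

section
/- Let a < b be real numbers and let g : [a,b] → (0,∞) be non-decreasing. Then for every s ∈ [a,b] one has (∫_a^s g(t) dt) · (∫_s^b g(t)⁻¹ dt) ≤ (s − a)(b − s), and consequently sup_{a ≤ s ≤ b} (∫_a^s g(t) dt)(∫_s^b g(t)⁻¹ dt) ≤ ((b − a)/2)². -/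
open MeasureTheory Set

/-!
Monotonicity bounds each factor by the value of `g` at the splitting point:
`∫_a^s g ≤ (s - a) g(s)` and `∫_s^b g⁻¹ ≤ (b - s) / g(s)`, so `g(s)` cancels in the product.
The second estimate is AM-GM for `s - a` and `b - s`.
-/

theorem MonotoneOn.intervalIntegral_le_sub_mul {f : ℝ → ℝ} {a b : ℝ} (hab : a ≤ b)
    (hf : MonotoneOn f (Icc a b)) : ∫ x in a..b, f x ≤ (b - a) * f b := by
  have hfab : IntervalIntegrable f volume a b := (uIcc_of_le hab ▸ hf).intervalIntegrable
  calc ∫ x in a..b, f x ≤ ∫ _ in a..b, f b :=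
        intervalIntegral.integral_mono_on hab hfab intervalIntegrable_const
          fun x hx => hf hx (right_mem_Icc.mpr hab) hx.2
    _ = (b - a) * f b := by rw [intervalIntegral.integral_const, smul_eq_mul]

theorem AntitoneOn.intervalIntegral_le_sub_mul {f : ℝ → ℝ} {a b : ℝ} (hab : a ≤ b)
    (hf : AntitoneOn f (Icc a b)) : ∫ x in a..b, f x ≤ (b - a) * f a := by
  have hfab : IntervalIntegrable f volume a b := (uIcc_of_le hab ▸ hf).intervalIntegrable
  calc ∫ x in a..b, f x ≤ ∫ _ in a..b, f a :=
        intervalIntegral.integral_mono_on hab hfab intervalIntegrable_const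
          fun x hx => hf (left_mem_Icc.mpr hab) hx hx.1
    _ = (b - a) * f a := by rw [intervalIntegral.integral_const, smul_eq_mul]

theorem MonotoneOn.inv_antitoneOn_of_pos {f : ℝ → ℝ} {s : Set ℝ} (hf : MonotoneOn f s)
    (hpos : ∀ x ∈ s, 0 < f x) : AntitoneOn (fun x => (f x)⁻¹) s :=
  fun _ hx _ hy hxy => inv_anti₀ (hpos _ hx) (hf hx hy hxy)

theorem integral_mul_integral_inv_le_of_monotoneOn {g : ℝ → ℝ} {a b s : ℝ}
    (hs : s ∈ Icc a b) (hgpos : ∀ t ∈ Icc a b, 0 < g t) (hgmono : MonotoneOn g (Icc a b)) :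
    (∫ t in a..s, g t) * (∫ t in s..b, (g t)⁻¹) ≤ (s - a) * (b - s) := by
  obtain ⟨has, hsb⟩ := hs
  have hleft : Icc a s ⊆ Icc a b := Icc_subset_Icc_right hsb
  have hright : Icc s b ⊆ Icc a b := Icc_subset_Icc_left has
  have hgs : 0 < g s := hgpos s ⟨has, hsb⟩
  have hint_g := (hgmono.mono hleft).intervalIntegral_le_sub_mul has
  have hint_inv :=
    ((hgmono.inv_antitoneOn_of_pos hgpos).mono hright).intervalIntegral_le_sub_mul hsb
  have hint_inv_nonneg : 0 ≤ ∫ t in s..b, (g t)⁻¹ :=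
    intervalIntegral.integral_nonneg hsb fun t ht => (inv_pos.mpr (hgpos t (hright ht))).le
  calc (∫ t in a..s, g t) * (∫ t in s..b, (g t)⁻¹)
      ≤ ((s - a) * g s) * ((b - s) * (g s)⁻¹) :=
        mul_le_mul hint_g hint_inv hint_inv_nonneg (mul_nonneg (sub_nonneg.mpr has) hgs.le)
    _ = (s - a) * (b - s) := by field_simp

theorem sub_mul_sub_le_sq_half (a b s : ℝ) : (s - a) * (b - s) ≤ ((b - a) / 2) ^ 2 := by
  linear_combination four_mul_le_sq_add (s - a) (b - s) / 4

theorem muckenhoupt_constant_estimate_general (a b : ℝ) (g : ℝ → ℝ)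
    (hgpos : ∀ t ∈ Icc a b, 0 < g t)
    (hgmono : MonotoneOn g (Icc a b)) :
    (∀ s ∈ Icc a b, (∫ t in a..s, g t) * (∫ t in s..b, (g t)⁻¹) ≤ (s - a) * (b - s)) ∧
    (∀ s ∈ Icc a b, (∫ t in a..s, g t) * (∫ t in s..b, (g t)⁻¹) ≤ ((b - a) / 2) ^ 2) :=
  ⟨fun _ hs => integral_mul_integral_inv_le_of_monotoneOn hs hgpos hgmono,
    fun s hs => (integral_mul_integral_inv_le_of_monotoneOn hs hgpos hgmono).trans
      (sub_mul_sub_le_sq_half a b s)⟩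

/-- Estimate of the Muckenhoupt-type constant in the proof of Lemma 4.2:
for non-decreasing positive `g` on `[a,b]`, for every `s ∈ [a,b]` one has
`(∫_a^s g)(∫_s^b g⁻¹) ≤ (s-a)(b-s)`, and consequently the supremum over `s`
is at most `((b-a)/2)²`. -/
theorem muckenhoupt_constant_estimate (a b : ℝ) (hab : a < b) (g : ℝ → ℝ)
    (hgpos : ∀ t ∈ Icc a b, 0 < g t)
    (hgmono : MonotoneOn g (Icc a b)) :
    (∀ s ∈ Icc a b, (∫ t in a..s, g t) * (∫ t in s..b, (g t)⁻¹) ≤ (s - a) * (b - s)) ∧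
    (∀ s ∈ Icc a b, (∫ t in a..s, g t) * (∫ t in s..b, (g t)⁻¹) ≤ ((b - a) / 2) ^ 2) :=
  muckenhoupt_constant_estimate_general a b g hgpos hgmono
end

section
/- Let C > 0 and α > 0, and define g(r) = exp(C r^α) for r ≥ 0. Then for every δ > 2 one has sup_{r>0} (∫₀^r g(s) ds)^{(δ−2)/δ} (∫_r^∞ g(s)⁻¹ ds) < ∞. -/
/-!
Write `g = exp ∘ φ` with `φ(s) = C s^α` increasing, `θ = (δ - 2)/δ ∈ (0, 1)` and `ε = (1 - θ)/2`.
Monotonicity gives `∫₀^r g ≤ r g(r)`, and splitting `g⁻¹ = g^{-(1-ε)} g^{-ε}` gives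
`∫_r^∞ g⁻¹ ≤ g(r)^{-(1-ε)} ∫₀^∞ g^{-ε}`. Since `θ - (1 - ε) = -ε`, the quantity in question is at most
`r^θ e^{-εC r^α} ∫₀^∞ e^{-εC s^α}`, and `y^p e^{-cy} ≤ (p/(ce))^p` bounds it uniformly in `r`.
-/

open MeasureTheory Set Real

lemma integrableOn_exp_neg_mul_rpow {b α : ℝ} (hb : 0 < b) (hα : 0 < α) :
    IntegrableOn (fun s : ℝ => exp (-(b * s ^ α))) (Ioi 0) := by
  -- substitute `s = x^{1/α}` to reach the Gamma-type integrand `x^{1/α - 1} e^{-b x}`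
  refine (integrableOn_Ioi_comp_rpow_iff' (fun s : ℝ => exp (-(b * s ^ α)))
    (p := α⁻¹) (by positivity)).mp ?_
  refine (integrableOn_rpow_mul_exp_neg_mul_rpow (p := 1) (s := α⁻¹ - 1)
    (by linarith [inv_pos.mpr hα]) one_pos hb).congr_fun (fun x hx => ?_) measurableSet_Ioi
  have hx_rpow : (x ^ α⁻¹ : ℝ) ^ α = x := by
    rw [← rpow_mul (le_of_lt hx), inv_mul_cancel₀ hα.ne', rpow_one]
  simp only [smul_eq_mul, hx_rpow, rpow_one, neg_mul]

lemma rpow_mul_exp_neg_mul_le {p c y : ℝ} (hp : 0 < p) (hc : 0 < c) (hy : 0 ≤ y) :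
    y ^ p * exp (-(c * y)) ≤ (p / (c * exp 1)) ^ p := by
  have hbase : y * exp (-(c * y) / p) ≤ p / (c * exp 1) := by
    have h := mul_exp_neg_le_exp_neg_one (c * y / p)
    rw [exp_neg 1] at h
    calc y * exp (-(c * y) / p) = p / c * (c * y / p * exp (-(c * y / p))) := by
          field_simp
      _ ≤ p / c * (exp 1)⁻¹ := by gcongr
      _ = p / (c * exp 1) := by field_simp
  calc y ^ p * exp (-(c * y)) = (y * exp (-(c * y) / p)) ^ p := by
        rw [mul_rpow hy (exp_pos _).le, ← exp_mul, div_mul_cancel₀ _ hp.ne']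
    _ ≤ (p / (c * exp 1)) ^ p := by gcongr

section MonotoneExponent

variable {φ : ℝ → ℝ} {r : ℝ}

lemma setIntegral_Ioo_exp_le (hφ : MonotoneOn φ (Ioc 0 r)) (hr : 0 ≤ r) :
    ∫ s in Ioo 0 r, exp (φ s) ≤ r * exp (φ r) := by
  have hbound : ∀ s ∈ Ioo 0 r, ‖exp (φ s)‖ ≤ exp (φ r) := fun s hs => by
    rw [norm_of_nonneg (exp_pos _).le, exp_le_exp]
    exact hφ (Ioo_subset_Ioc_self hs) ⟨hs.1.trans hs.2, le_rfl⟩ hs.2.le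
  have h := norm_setIntegral_le_of_norm_le_const (measure_Ioo_lt_top (μ := volume)) hbound
  rw [norm_eq_abs, measureReal_def, volume_Ioo, sub_zero, ENNReal.toReal_ofReal hr, mul_comm] at h
  exact (le_abs_self _).trans h

lemma setIntegral_Ioi_exp_neg_le {ε : ℝ} (hφ : MonotoneOn φ (Ici r)) (hr : 0 ≤ r)
    (hε : ε ≤ 1) (hint : IntegrableOn (fun s => exp (-φ s)) (Ioi r))
    (hintε : IntegrableOn (fun s => exp (-(ε * φ s))) (Ioi 0)) :
    ∫ s in Ioi r, exp (-φ s) ≤ exp (-((1 - ε) * φ r)) * ∫ s in Ioi 0, exp (-(ε * φ s)) := by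
  calc ∫ s in Ioi r, exp (-φ s)
      ≤ ∫ s in Ioi r, exp (-((1 - ε) * φ r)) * exp (-(ε * φ s)) := by
        refine setIntegral_mono_on hint
          ((hintε.mono_set (Ioi_subset_Ioi hr)).const_mul _) measurableSet_Ioi fun s hs => ?_
        have hφrs : φ r ≤ φ s := hφ self_mem_Ici (mem_Ici_of_Ioi hs) (le_of_lt hs)
        rw [← exp_add, exp_le_exp]
        nlinarith
    _ = exp (-((1 - ε) * φ r)) * ∫ s in Ioi r, exp (-(ε * φ s)) := integral_const_mul _ _
    _ ≤ exp (-((1 - ε) * φ r)) * ∫ s in Ioi 0, exp (-(ε * φ s)) := by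
        refine mul_le_mul_of_nonneg_left ?_ (exp_pos _).le
        exact setIntegral_mono_set hintε (.of_forall fun _ => (exp_pos _).le)
          (Ioi_subset_Ioi hr).eventuallyLE

lemma muckenhoupt_exp_le {θ : ℝ} (hφ : MonotoneOn φ (Ioi 0)) (hr : 0 < r) (hθ₀ : 0 ≤ θ)
    (hint : IntegrableOn (fun s => exp (-φ s)) (Ioi r))
    (hintε : IntegrableOn (fun s => exp (-((1 - θ) / 2 * φ s))) (Ioi 0)) :
    (∫ s in Ioo 0 r, exp (φ s)) ^ θ * ∫ s in Ioi r, exp (-φ s) ≤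
      r ^ θ * exp (-((1 - θ) / 2 * φ r)) * ∫ s in Ioi 0, exp (-((1 - θ) / 2 * φ s)) := by
  have hfirst := setIntegral_Ioo_exp_le (hφ.mono Ioc_subset_Ioi_self) hr.le
  have htail := setIntegral_Ioi_exp_neg_le (hφ.mono (Ici_subset_Ioi.mpr hr)) hr.le
    (by linarith) hint hintε
  set ε := (1 - θ) / 2
  have hexponent : exp (φ r * θ) * exp (-((1 - ε) * φ r)) = exp (-(ε * φ r)) := by
    rw [← exp_add]
    congr 1
    ring
  calc (∫ s in Ioo 0 r, exp (φ s)) ^ θ * ∫ s in Ioi r, exp (-φ s)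
      ≤ (r * exp (φ r)) ^ θ * (exp (-((1 - ε) * φ r)) * ∫ s in Ioi 0, exp (-(ε * φ s))) := by
        gcongr
    _ = r ^ θ * exp (-(ε * φ r)) * ∫ s in Ioi 0, exp (-(ε * φ s)) := by
        rw [mul_rpow hr.le (exp_pos _).le, ← exp_mul, ← hexponent]
        ring

end MonotoneExponent

/-- For the exponentially growing weight `g(r) = exp(C r^α)` with `C, α > 0`, the
Muckenhoupt-type quantity `sup_{r>0} (∫₀^r g)^{(δ-2)/δ} (∫_r^∞ g⁻¹)` is finite for
every `δ > 2` (hypothesis (2.6) of Theorem 2.5 holds for all `δ > 2`). -/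
theorem muckenhoupt_finite_exponential (C α : ℝ) (hC : 0 < C) (hα : 0 < α)
    (δ : ℝ) (hδ : 2 < δ) :
    ∃ M : ℝ, ∀ r : ℝ, 0 < r →
      (∫ s in Ioo (0:ℝ) r, Real.exp (C * s ^ α)) ^ ((δ - 2) / δ) *
        (∫ s in Ioi r, (Real.exp (C * s ^ α))⁻¹) ≤ M := by
  set θ := (δ - 2) / δ
  set ε := (1 - θ) / 2
  have hθ₀ : 0 < θ := div_pos (by linarith) (by linarith)
  have hθ₁ : θ < 1 := (div_lt_one (by linarith)).mpr (by linarith)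
  have hεC : 0 < ε * C := mul_pos (by simp only [ε]; linarith) hC
  have hφ : MonotoneOn (fun s : ℝ => C * s ^ α) (Ioi 0) := fun x hx _ _ hxy =>
    mul_le_mul_of_nonneg_left (rpow_le_rpow (le_of_lt hx) hxy hα.le) hC.le
  have hintε : IntegrableOn (fun s => exp (-(ε * (C * s ^ α)))) (Ioi 0) := by
    simpa only [mul_assoc] using integrableOn_exp_neg_mul_rpow hεC hα
  refine ⟨(θ / α / (ε * C * exp 1)) ^ (θ / α) * ∫ s in Ioi 0, exp (-(ε * (C * s ^ α))),
    fun r hr => ?_⟩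
  have hdecay : r ^ θ * exp (-(ε * (C * r ^ α))) ≤ (θ / α / (ε * C * exp 1)) ^ (θ / α) := by
    have hrθ : (r ^ α) ^ (θ / α) = r ^ θ := by rw [← rpow_mul hr.le, mul_div_cancel₀ _ hα.ne']
    rw [← mul_assoc, ← hrθ]
    exact rpow_mul_exp_neg_mul_le (by positivity) hεC (rpow_nonneg hr.le α)
  simp_rw [← exp_neg]
  exact (muckenhoupt_exp_le hφ hr hθ₀.le
    ((integrableOn_exp_neg_mul_rpow hC hα).mono_set (Ioi_subset_Ioi hr.le)) hintε).trans
    (by gcongr)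
end
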